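/- Let t1, t2 be CLL process terms. (1) If t1 ⇒ε_F| t1' and t2 ⇒ε_F| t2', then t1⊙t2 ⇒ε_F| t1'⊙t2' for ⊙ ∈ {□, ∥_A}; moreover t1∧t2 ⇒ε_F| t1'∧t2' provided t1'∧t2' ∉ F_CLL. (2) For each ⊙ ∈ {□, ∥_A, ∧}: if t1⊙t2 ⇒ε_F| t3 then there exist t1', t2' with t1 ⇒ε_F| t1', t2 ⇒ε_F| t2' and t3 ≡ t1'⊙t2'. -/

import Mathlib

namespace CLL

attribute [local instance] Classical.propDecidable

/-- CLL process terms over a set `Act` of visible actions.  The action `τ` is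
represented by `none : Option Act`, a visible action `a` by `some a`. -/
inductive Tm (Act : Type) : Type where
  | nil  : Tm Act                            -- 0
  | bot  : Tm Act                            -- ⊥
  | pre  : Option Act → Tm Act → Tm Act      -- α.t
  | ec   : Tm Act → Tm Act → Tm Act          -- t □ t
  | conj : Tm Act → Tm Act → Tm Act          -- t ∧ t
  | disj : Tm Act → Tm Act → Tm Act          -- t ∨ t
  | par  : Set Act → Tm Act → Tm Act → Tm Act -- t ∥_A t

/-- A transition model: a set of transitions `t →α t'`, of instances `t F` of the
inconsistency predicate, and of instances `t F̄_α` of the auxiliary predicates. -/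
structure Model (Act : Type) where
  Tr   : Tm Act → Option Act → Tm Act → Prop
  F    : Tm Act → Prop
  Fbar : Tm Act → Option Act → Prop

variable {Act : Type}

/-- The least transition relation of the positive TSS `Strip(P_CLL, M)`:
ground instances of transition rules of `P_CLL` whose negative premises
(checked against `M`) hold, with those negative premises removed. -/
inductive STr (M : Model Act) : Tm Act → Option Act → Tm Act → Prop where
  | pre (α : Option Act) (t : Tm Act) : STr M (Tm.pre α t) α t
  | ecL {t1 t2 y1 : Tm Act} {a : Act} :
      STr M t1 (some a) y1 → (∀ y, ¬ M.Tr t2 none y) →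
      STr M (Tm.ec t1 t2) (some a) y1
  | ecR {t1 t2 y2 : Tm Act} {a : Act} :
      (∀ y, ¬ M.Tr t1 none y) → STr M t2 (some a) y2 →
      STr M (Tm.ec t1 t2) (some a) y2
  | ecTauL {t1 t2 y1 : Tm Act} :
      STr M t1 none y1 → STr M (Tm.ec t1 t2) none (Tm.ec y1 t2)
  | ecTauR {t1 t2 y2 : Tm Act} :
      STr M t2 none y2 → STr M (Tm.ec t1 t2) none (Tm.ec t1 y2)
  | conjAct {t1 t2 y1 y2 : Tm Act} {a : Act} :
      STr M t1 (some a) y1 → STr M t2 (some a) y2 →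
      STr M (Tm.conj t1 t2) (some a) (Tm.conj y1 y2)
  | conjTauL {t1 t2 y1 : Tm Act} :
      STr M t1 none y1 → STr M (Tm.conj t1 t2) none (Tm.conj y1 t2)
  | conjTauR {t1 t2 y2 : Tm Act} :
      STr M t2 none y2 → STr M (Tm.conj t1 t2) none (Tm.conj t1 y2)
  | disjL (t1 t2 : Tm Act) : STr M (Tm.disj t1 t2) none t1
  | disjR (t1 t2 : Tm Act) : STr M (Tm.disj t1 t2) none t2
  | parTauL {A : Set Act} {t1 t2 y1 : Tm Act} :
      STr M t1 none y1 → STr M (Tm.par A t1 t2) none (Tm.par A y1 t2)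
  | parTauR {A : Set Act} {t1 t2 y2 : Tm Act} :
      STr M t2 none y2 → STr M (Tm.par A t1 t2) none (Tm.par A t1 y2)
  | parL {A : Set Act} {t1 t2 y1 : Tm Act} {a : Act} :
      STr M t1 (some a) y1 → (∀ y, ¬ M.Tr t2 none y) → a ∉ A →
      STr M (Tm.par A t1 t2) (some a) (Tm.par A y1 t2)
  | parR {A : Set Act} {t1 t2 y2 : Tm Act} {a : Act} :
      (∀ y, ¬ M.Tr t1 none y) → STr M t2 (some a) y2 → a ∉ A →
      STr M (Tm.par A t1 t2) (some a) (Tm.par A t1 y2)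
  | parSync {A : Set Act} {t1 t2 y1 y2 : Tm Act} {a : Act} :
      STr M t1 (some a) y1 → STr M t2 (some a) y2 → a ∈ A →
      STr M (Tm.par A t1 t2) (some a) (Tm.par A y1 y2)

/-- Least model of the `F̄_α` rules of `Strip(P_CLL, M)`. -/
inductive SFbar (M : Model Act) : Tm Act → Option Act → Prop where
  | intro {t1 t2 y : Tm Act} {α : Option Act} :
      STr M (Tm.conj t1 t2) α y → ¬ M.F y → SFbar M (Tm.conj t1 t2) α

/-- Least model of the `F` rules of `Strip(P_CLL, M)`. -/
inductive SF (M : Model Act) : Tm Act → Prop where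
  | bot : SF M Tm.bot
  | pre {t : Tm Act} (α : Option Act) : SF M t → SF M (Tm.pre α t)
  | disj {t1 t2 : Tm Act} : SF M t1 → SF M t2 → SF M (Tm.disj t1 t2)
  | ecL {t1 t2 : Tm Act} : SF M t1 → SF M (Tm.ec t1 t2)
  | ecR {t1 t2 : Tm Act} : SF M t2 → SF M (Tm.ec t1 t2)
  | conjL {t1 t2 : Tm Act} : SF M t1 → SF M (Tm.conj t1 t2)
  | conjR {t1 t2 : Tm Act} : SF M t2 → SF M (Tm.conj t1 t2)
  | parL {A : Set Act} {t1 t2 : Tm Act} : SF M t1 → SF M (Tm.par A t1 t2)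
  | parR {A : Set Act} {t1 t2 : Tm Act} : SF M t2 → SF M (Tm.par A t1 t2)
  | conjMisL {t1 t2 y1 : Tm Act} {a : Act} :
      STr M t1 (some a) y1 → (∀ y, ¬ M.Tr t2 (some a) y) →
      (∀ y, ¬ M.Tr (Tm.conj t1 t2) none y) → SF M (Tm.conj t1 t2)
  | conjMisR {t1 t2 y2 : Tm Act} {a : Act} :
      (∀ y, ¬ M.Tr t1 (some a) y) → STr M t2 (some a) y2 →
      (∀ y, ¬ M.Tr (Tm.conj t1 t2) none y) → SF M (Tm.conj t1 t2)
  | conjDead {t1 t2 z : Tm Act} {α : Option Act} :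
      STr M (Tm.conj t1 t2) α z → ¬ M.Fbar (Tm.conj t1 t2) α →
      SF M (Tm.conj t1 t2)

/-- `M` is a stable transition model of `P_CLL`:  `M` coincides with the least
model of the positive TSS `Strip(P_CLL, M)`. -/
def IsStable (M : Model Act) : Prop :=
  (∀ t α t', M.Tr t α t' ↔ STr M t α t') ∧
  (∀ t, M.F t ↔ SF M t) ∧
  (∀ t α, M.Fbar t α ↔ SFbar M t α)

/-- `t` is stable: it has no τ-transition. -/
def Stable (M : Model Act) (t : Tm Act) : Prop := ∀ t', ¬ M.Tr t none t'

/-- The ready set `I(t)`. -/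
def Ready (M : Model Act) (t : Tm Act) : Set (Option Act) :=
  {α | ∃ u, M.Tr t α u}

/-- One τ-step between consistent terms: `t →τ_F s`. -/
def TauF (M : Model Act) (t s : Tm Act) : Prop :=
  M.Tr t none s ∧ ¬ M.F t ∧ ¬ M.F s

/-- `t ⇒ε_F s`: a sequence of τ-transitions all whose terms (endpoints included)
are consistent. -/
def EpsF (M : Model Act) (t s : Tm Act) : Prop :=
  ¬ M.F t ∧ Relation.ReflTransGen (TauF M) t s

/-- `t ⇒ε_F| s`:  `t ⇒ε_F s` with `s` stable. -/
def EpsFS (M : Model Act) (t s : Tm Act) : Prop :=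
  EpsF M t s ∧ Stable M s

/-- `t ⇒α_F s`. -/
def WeakF (M : Model Act) (α : Option Act) (t s : Tm Act) : Prop :=
  ∃ r p, EpsF M t r ∧ M.Tr r α p ∧ EpsF M p s

/-- `t ⇒α_F| s`. -/
def WeakFS (M : Model Act) (α : Option Act) (t s : Tm Act) : Prop :=
  WeakF M α t s ∧ Stable M s

/-- `R` is a stable ready simulation relation. -/
def IsRS (M : Model Act) (R : Tm Act → Tm Act → Prop) : Prop :=
  ∀ t s, R t s →
    (Stable M t ∧ Stable M s) ∧
    (¬ M.F t → ¬ M.F s) ∧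
    (∀ (a : Act) t', WeakFS M (some a) t t' →
      ∃ s', WeakFS M (some a) s s' ∧ R t' s') ∧
    (¬ M.F t → Ready M t = Ready M s)

/-- `t ⊏̃_RS s`. -/
def RSs (M : Model Act) (t s : Tm Act) : Prop :=
  ∃ R, IsRS M R ∧ R t s

/-- `t ⊑_RS s`. -/
def RSle (M : Model Act) (t s : Tm Act) : Prop :=
  ∀ t', EpsFS M t t' → ∃ s', EpsFS M s s' ∧ RSs M t' s'

/-- `t =_RS s`. -/
def RSeq (M : Model Act) (t s : Tm Act) : Prop :=
  RSle M t s ∧ RSle M s t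

/-- The binary operators `□`, `∧` and `∥_A`. -/
def IsStaticOp (Act : Type) (op : Tm Act → Tm Act → Tm Act) : Prop :=
  op = Tm.ec ∨ op = Tm.conj ∨ ∃ A : Set Act, op = Tm.par A

/-- General external choice `□_{i<n} t_i` over a finite sequence of terms. -/
def bigEC : List (Tm Act) → Tm Act
  | [] => Tm.nil
  | t :: ts => ts.foldl Tm.ec t

/-- General disjunction `⋁_{i<n} t_i` over a finite (nonempty) sequence. -/
def bigDisj : List (Tm Act) → Tm Act
  | [] => Tm.nil
  | t :: ts => ts.foldl Tm.disj t

/-- `□_{i<n} a_i.t_i` for a sequence of prefixed terms given by pairs. -/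
def ecPre (l : List (Act × Tm Act)) : Tm Act :=
  bigEC (l.map fun p => Tm.pre (some p.1) p.2)

/-- The sequence of all `a_i.(t_i ∧ s_j)` with `a_i = b_j`. -/
noncomputable def matched (l1 l2 : List (Act × Tm Act)) : List (Act × Tm Act) :=
  ((l1.product l2).filter fun q => decide (q.1.1 = q.2.1)).map
    fun q => (q.1.1, Tm.conj q.1.2 q.2.2)

/-- The right-hand side `((□Ω1)□(□Ω2))□(□Ω3)` of the expansion law. -/
noncomputable def expRHS (A : Set Act) (l1 l2 : List (Act × Tm Act)) : Tm Act :=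
  Tm.ec
    (Tm.ec
      (bigEC ((l1.filter fun p => decide (p.1 ∉ A)).map
        fun p => Tm.pre (some p.1) (Tm.par A p.2 (ecPre l2))))
      (bigEC ((l2.filter fun q => decide (q.1 ∉ A)).map
        fun q => Tm.pre (some q.1) (Tm.par A (ecPre l1) q.2))))
    (bigEC (((l1.product l2).filter fun q => decide (q.1.1 = q.2.1 ∧ q.1.1 ∈ A)).map
      fun q => Tm.pre (some q.1.1) (Tm.par A q.1.2 q.2.2)))

/-- Basic process terms: built from `0` by prefixing, `∨`, `□` and `∥_A`. -/
inductive Basic : Tm Act → Prop where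
  | nil : Basic Tm.nil
  | pre (α : Option Act) {t : Tm Act} : Basic t → Basic (Tm.pre α t)
  | disj {t1 t2 : Tm Act} : Basic t1 → Basic t2 → Basic (Tm.disj t1 t2)
  | ec {t1 t2 : Tm Act} : Basic t1 → Basic t2 → Basic (Tm.ec t1 t2)
  | par (A : Set Act) {t1 t2 : Tm Act} :
      Basic t1 → Basic t2 → Basic (Tm.par A t1 t2)

/-- Derivability `⊢ t ≤ s` in the axiomatic system `AX_CLL`. -/
inductive Deriv : Tm Act → Tm Act → Prop where
  -- inference rules
  | refl (t : Tm Act) : Deriv t t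
  | trans {t u s : Tm Act} : Deriv t u → Deriv u s → Deriv t s
  | pre_mono (α : Option Act) {t s : Tm Act} :
      Deriv t s → Deriv (Tm.pre α t) (Tm.pre α s)
  | ec_mono {t1 s1 t2 s2 : Tm Act} :
      Deriv t1 s1 → Deriv t2 s2 → Deriv (Tm.ec t1 t2) (Tm.ec s1 s2)
  | conj_mono {t1 s1 t2 s2 : Tm Act} :
      Deriv t1 s1 → Deriv t2 s2 → Deriv (Tm.conj t1 t2) (Tm.conj s1 s2)
  | disj_mono {t1 s1 t2 s2 : Tm Act} :
      Deriv t1 s1 → Deriv t2 s2 → Deriv (Tm.disj t1 t2) (Tm.disj s1 s2)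
  | par_mono (A : Set Act) {t1 s1 t2 s2 : Tm Act} :
      Deriv t1 s1 → Deriv t2 s2 → Deriv (Tm.par A t1 t2) (Tm.par A s1 s2)
  -- EC1–EC5
  | ec_comm (x y : Tm Act) : Deriv (Tm.ec x y) (Tm.ec y x)
  | ec_assoc1 (x y z : Tm Act) : Deriv (Tm.ec (Tm.ec x y) z) (Tm.ec x (Tm.ec y z))
  | ec_assoc2 (x y z : Tm Act) : Deriv (Tm.ec x (Tm.ec y z)) (Tm.ec (Tm.ec x y) z)
  | ec_idem1 (x : Tm Act) : Deriv (Tm.ec x x) x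
  | ec_idem2 (x : Tm Act) : Deriv x (Tm.ec x x)
  | ec_nil1 (x : Tm Act) : Deriv (Tm.ec x Tm.nil) x
  | ec_nil2 (x : Tm Act) : Deriv x (Tm.ec x Tm.nil)
  | ec_bot1 (x : Tm Act) : Deriv (Tm.ec x Tm.bot) Tm.bot
  | ec_bot2 (x : Tm Act) : Deriv Tm.bot (Tm.ec x Tm.bot)
  -- DI1–DI5
  | di_comm (x y : Tm Act) : Deriv (Tm.disj x y) (Tm.disj y x)
  | di_assoc1 (x y z : Tm Act) :
      Deriv (Tm.disj x (Tm.disj y z)) (Tm.disj (Tm.disj x y) z)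
  | di_assoc2 (x y z : Tm Act) :
      Deriv (Tm.disj (Tm.disj x y) z) (Tm.disj x (Tm.disj y z))
  | di_idem1 (x : Tm Act) : Deriv (Tm.disj x x) x
  | di_idem2 (x : Tm Act) : Deriv x (Tm.disj x x)
  | di_bot1 (x : Tm Act) : Deriv (Tm.disj x Tm.bot) x
  | di_bot2 (x : Tm Act) : Deriv x (Tm.disj x Tm.bot)
  | di_le (x y : Tm Act) : Deriv x (Tm.disj x y)
  -- CO1–CO4
  | co_comm (x y : Tm Act) : Deriv (Tm.conj x y) (Tm.conj y x)
  | co_assoc1 (x y z : Tm Act) :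
      Deriv (Tm.conj (Tm.conj x y) z) (Tm.conj x (Tm.conj y z))
  | co_assoc2 (x y z : Tm Act) :
      Deriv (Tm.conj x (Tm.conj y z)) (Tm.conj (Tm.conj x y) z)
  | co_idem1 (x : Tm Act) : Deriv (Tm.conj x x) x
  | co_idem2 (x : Tm Act) : Deriv x (Tm.conj x x)
  | co_bot1 (x : Tm Act) : Deriv (Tm.conj x Tm.bot) Tm.bot
  | co_bot2 (x : Tm Act) : Deriv Tm.bot (Tm.conj x Tm.bot)
  -- DS1–DS4
  | ds1 (x y z : Tm Act) :
      Deriv (Tm.ec x (Tm.disj y z)) (Tm.disj (Tm.ec x y) (Tm.ec x z))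
  | ds2 (x y z : Tm Act) :
      Deriv (Tm.conj x (Tm.disj y z)) (Tm.disj (Tm.conj x y) (Tm.conj x z))
  | ds3 (A : Set Act) (x y z : Tm Act) :
      Deriv (Tm.par A x (Tm.disj y z)) (Tm.disj (Tm.par A x y) (Tm.par A x z))
  | ds4 (a : Act) {x y : Tm Act} : Basic x → Basic y →
      Deriv (Tm.pre (some a) (Tm.disj x y))
            (Tm.ec (Tm.pre (some a) x) (Tm.pre (some a) y))
  -- PR1, PR2
  | pr1a (a : Act) : Deriv (Tm.pre (some a) Tm.bot) Tm.bot
  | pr1b (a : Act) : Deriv Tm.bot (Tm.pre (some a) Tm.bot)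
  | pr2a (x : Tm Act) : Deriv (Tm.pre none x) x
  | pr2b (x : Tm Act) : Deriv x (Tm.pre none x)
  -- PA1, PA2
  | pa_comm (A : Set Act) (x y : Tm Act) : Deriv (Tm.par A x y) (Tm.par A y x)
  | pa_bot1 (A : Set Act) (x : Tm Act) : Deriv (Tm.par A x Tm.bot) Tm.bot
  | pa_bot2 (A : Set Act) (x : Tm Act) : Deriv Tm.bot (Tm.par A x Tm.bot)
  -- ECC1–ECC3
  | ecc1a (l1 l2 : List (Act × Tm Act)) :
      ({a | a ∈ l1.map Prod.fst} : Set Act) ≠ {a | a ∈ l2.map Prod.fst} →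
      Deriv (Tm.conj (ecPre l1) (ecPre l2)) Tm.bot
  | ecc1b (l1 l2 : List (Act × Tm Act)) :
      ({a | a ∈ l1.map Prod.fst} : Set Act) ≠ {a | a ∈ l2.map Prod.fst} →
      Deriv Tm.bot (Tm.conj (ecPre l1) (ecPre l2))
  | ecc2 (l : List (Act × Tm Act × Tm Act)) :
      Deriv (ecPre (l.map fun p => (p.1, Tm.conj p.2.1 p.2.2)))
            (Tm.conj (ecPre (l.map fun p => (p.1, p.2.1)))
                     (ecPre (l.map fun p => (p.1, p.2.2))))
  | ecc3 (l : List (Act × Tm Act × Tm Act)) :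
      (l.map Prod.fst).Nodup →
      Deriv (Tm.conj (ecPre (l.map fun p => (p.1, p.2.1)))
                     (ecPre (l.map fun p => (p.1, p.2.2))))
            (ecPre (l.map fun p => (p.1, Tm.conj p.2.1 p.2.2)))
  -- EXP1, EXP2
  | exp1 (A : Set Act) (l1 l2 : List (Act × Tm Act)) :
      (∀ p ∈ l1, Basic p.2) → (∀ q ∈ l2, Basic q.2) →
      Deriv (Tm.par A (ecPre l1) (ecPre l2)) (expRHS A l1 l2)
  | exp2 (A : Set Act) (l1 l2 : List (Act × Tm Act)) :
      (∀ p ∈ l1, Basic p.2) → (∀ q ∈ l2, Basic q.2) →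
      Deriv (expRHS A l1 l2) (Tm.par A (ecPre l1) (ecPre l2))

/-- The set `NF_B` of normal forms different from `⊥`. -/
inductive NFB : Tm Act → Prop where
  | mk (ls : List (List (Act × Tm Act))) :
      ls ≠ [] →
      (∀ l ∈ ls, (l.map Prod.fst).Nodup) →
      (∀ l ∈ ls, ∀ p ∈ l, NFB p.2) →
      NFB (bigDisj (ls.map ecPre))

/-- Normal forms. -/
def NF (t : Tm Act) : Prop := t = Tm.bot ∨ NFB t

end CLL

/-!
Every τ-step of `t1 ⊙ t2` is a τ-step of one component, and consistency of `t1 ⊙ t2`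
implies that of both components; this gives decomposition. For composition the τ-steps of
the components are interleaved, and consistency is propagated backwards from the final term:
for `□` and `∥_A` it is automatic, while for `∧` a τ-step to a consistent term rules out
every rule for `F`, since a conjunction with a τ-step has no visible transition and
satisfies `F̄_τ`.
-/

namespace CLL

variable {Act : Type} {M : Model Act}

theorem IsStable.tr_iff (hM : IsStable M) {t t' : Tm Act} {α : Option Act} :
    M.Tr t α t' ↔ STr M t α t' :=
  hM.1 t α t'

theorem IsStable.F_iff (hM : IsStable M) {t : Tm Act} : M.F t ↔ SF M t :=
  hM.2.1 t

theorem IsStable.Fbar_iff (hM : IsStable M) {t : Tm Act} {α : Option Act} :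
    M.Fbar t α ↔ SFbar M t α :=
  hM.2.2 t α

theorem STr.not_tau_of_some (hM : IsStable M) {t t' : Tm Act} {a : Act}
    (h : STr M t (some a) t') (s : Tm Act) : ¬ STr M t none s := by
  generalize hα : some a = α at h
  induction h generalizing s with
  | pre => subst hα; rintro ⟨⟩
  | ecL _ h2 ih =>
      intro hs
      cases hs with
      | ecTauL hs => exact ih _ hα hs
      | ecTauR hs => exact h2 _ (hM.tr_iff.2 hs)
  | ecR h1 _ ih =>
      intro hs
      cases hs with
      | ecTauL hs => exact h1 _ (hM.tr_iff.2 hs)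
      | ecTauR hs => exact ih _ hα hs
  | conjAct _ _ ih1 ih2 =>
      intro hs
      cases hs with
      | conjTauL hs => exact ih1 _ hα hs
      | conjTauR hs => exact ih2 _ hα hs
  | parL _ h2 _ ih =>
      intro hs
      cases hs with
      | parTauL hs => exact ih _ hα hs
      | parTauR hs => exact h2 _ (hM.tr_iff.2 hs)
  | parR h1 _ _ ih =>
      intro hs
      cases hs with
      | parTauL hs => exact h1 _ (hM.tr_iff.2 hs)
      | parTauR hs => exact ih _ hα hs
  | parSync _ _ _ ih1 ih2 =>
      intro hs
      cases hs with
      | parTauL hs => exact ih1 _ hα hs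
      | parTauR hs => exact ih2 _ hα hs
  | _ => cases hα

theorem EpsF.not_F_right {t s : Tm Act} (h : EpsF M t s) : ¬ M.F s := by
  rcases h.2.cases_tail with rfl | ⟨_, _, hstep⟩
  exacts [h.1, hstep.2.2]

theorem IsStable.F_ec_iff (hM : IsStable M) {t1 t2 : Tm Act} :
    M.F (Tm.ec t1 t2) ↔ M.F t1 ∨ M.F t2 := by
  simp only [hM.F_iff]
  constructor
  · intro h
    cases h with
    | ecL h => exact Or.inl h
    | ecR h => exact Or.inr h
  · rintro (h | h)
    exacts [SF.ecL h, SF.ecR h]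

theorem IsStable.F_par_iff (hM : IsStable M) {A : Set Act} {t1 t2 : Tm Act} :
    M.F (Tm.par A t1 t2) ↔ M.F t1 ∨ M.F t2 := by
  simp only [hM.F_iff]
  constructor
  · intro h
    cases h with
    | parL h => exact Or.inl h
    | parR h => exact Or.inr h
  · rintro (h | h)
    exacts [SF.parL h, SF.parR h]

theorem IsStable.F_of_ec_or_par (hM : IsStable M) {op : Tm Act → Tm Act → Tm Act}
    (hop : op = Tm.ec ∨ ∃ A : Set Act, op = Tm.par A) {t1 t2 : Tm Act}
    (h : M.F (op t1 t2)) : M.F t1 ∨ M.F t2 := by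
  rcases hop with rfl | ⟨A, rfl⟩
  exacts [hM.F_ec_iff.1 h, hM.F_par_iff.1 h]

theorem IsStable.not_F_conj_of_tau (hM : IsStable M) {u v z : Tm Act}
    (hu : ¬ M.F u) (hv : ¬ M.F v) (hz : M.Tr (Tm.conj u v) none z) (hzF : ¬ M.F z) :
    ¬ M.F (Tm.conj u v) := by
  have hz' := hM.tr_iff.1 hz
  intro hF
  cases hM.F_iff.1 hF with
  | conjL h => exact hu (hM.F_iff.2 h)
  | conjR h => exact hv (hM.F_iff.2 h)
  | conjMisL _ _ h => exact h z hz
  | conjMisR _ _ h => exact h z hz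
  | conjDead hdead hnFbar =>
      cases hdead with
      | conjAct h1 h2 => exact (STr.conjAct h1 h2).not_tau_of_some hM z hz'
      | conjTauL => exact hnFbar (hM.Fbar_iff.2 (SFbar.intro hz' hzF))
      | conjTauR => exact hnFbar (hM.Fbar_iff.2 (SFbar.intro hz' hzF))

namespace IsStaticOp

variable {op : Tm Act → Tm Act → Tm Act}

theorem tr_tau_left (hop : IsStaticOp Act op) (hM : IsStable M)
    {t1 t2 u : Tm Act} (h : M.Tr t1 none u) :
    M.Tr (op t1 t2) none (op u t2) := by
  rw [hM.tr_iff] at h ⊢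
  rcases hop with rfl | rfl | ⟨A, rfl⟩
  exacts [STr.ecTauL h, STr.conjTauL h, STr.parTauL h]

theorem tr_tau_right (hop : IsStaticOp Act op) (hM : IsStable M)
    {t1 t2 v : Tm Act} (h : M.Tr t2 none v) :
    M.Tr (op t1 t2) none (op t1 v) := by
  rw [hM.tr_iff] at h ⊢
  rcases hop with rfl | rfl | ⟨A, rfl⟩
  exacts [STr.ecTauR h, STr.conjTauR h, STr.parTauR h]

theorem tr_tau_cases (hop : IsStaticOp Act op) (hM : IsStable M)
    {t1 t2 z : Tm Act} (h : M.Tr (op t1 t2) none z) :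
    (∃ u, z = op u t2 ∧ M.Tr t1 none u) ∨ (∃ v, z = op t1 v ∧ M.Tr t2 none v) := by
  rw [hM.tr_iff] at h
  rcases hop with rfl | rfl | ⟨A, rfl⟩
  · cases h with
    | ecTauL h => exact .inl ⟨_, rfl, hM.tr_iff.2 h⟩
    | ecTauR h => exact .inr ⟨_, rfl, hM.tr_iff.2 h⟩
  · cases h with
    | conjTauL h => exact .inl ⟨_, rfl, hM.tr_iff.2 h⟩
    | conjTauR h => exact .inr ⟨_, rfl, hM.tr_iff.2 h⟩
  · cases h with
    | parTauL h => exact .inl ⟨_, rfl, hM.tr_iff.2 h⟩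
    | parTauR h => exact .inr ⟨_, rfl, hM.tr_iff.2 h⟩

theorem stable_iff (hop : IsStaticOp Act op) (hM : IsStable M)
    {t1 t2 : Tm Act} :
    Stable M (op t1 t2) ↔ Stable M t1 ∧ Stable M t2 := by
  refine ⟨fun h => ⟨fun u hu => h _ (hop.tr_tau_left hM hu),
    fun v hv => h _ (hop.tr_tau_right hM hv)⟩, fun ⟨h1, h2⟩ z hz => ?_⟩
  rcases hop.tr_tau_cases hM hz with ⟨u, -, hu⟩ | ⟨v, -, hv⟩
  exacts [h1 u hu, h2 v hv]

theorem F_left (hop : IsStaticOp Act op) (hM : IsStable M)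
    {t1 t2 : Tm Act} (h : M.F t1) : M.F (op t1 t2) := by
  rw [hM.F_iff] at h ⊢
  rcases hop with rfl | rfl | ⟨A, rfl⟩
  exacts [SF.ecL h, SF.conjL h, SF.parL h]

theorem F_right (hop : IsStaticOp Act op) (hM : IsStable M)
    {t1 t2 : Tm Act} (h : M.F t2) : M.F (op t1 t2) := by
  rw [hM.F_iff] at h ⊢
  rcases hop with rfl | rfl | ⟨A, rfl⟩
  exacts [SF.ecR h, SF.conjR h, SF.parR h]

theorem not_F_of_tr_tau (hop : IsStaticOp Act op) (hM : IsStable M)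
    {u v z : Tm Act} (hu : ¬ M.F u) (hv : ¬ M.F v)
    (hz : M.Tr (op u v) none z) (hzF : ¬ M.F z) : ¬ M.F (op u v) := by
  rcases hop with rfl | rfl | ⟨A, rfl⟩
  · simpa only [hM.F_ec_iff, not_or] using ⟨hu, hv⟩
  · exact hM.not_F_conj_of_tau hu hv hz hzF
  · simpa only [hM.F_par_iff, not_or] using ⟨hu, hv⟩

theorem epsF_left (hop : IsStaticOp Act op) (hM : IsStable M)
    {u u' v : Tm Act} (hp : Relation.ReflTransGen (TauF M) u u')
    (hv : ¬ M.F v) (h' : ¬ M.F (op u' v)) : EpsF M (op u v) (op u' v) := by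
  induction hp using Relation.ReflTransGen.head_induction_on with
  | refl => exact ⟨h', .refl⟩
  | head hstep _ ih =>
      have hstep' := hop.tr_tau_left hM (t2 := v) hstep.1
      have hF := hop.not_F_of_tr_tau hM hstep.2.1 hv hstep' ih.1
      exact ⟨hF, ih.2.head ⟨hstep', hF, ih.1⟩⟩

theorem epsF_right (hop : IsStaticOp Act op) (hM : IsStable M)
    {u v v' : Tm Act} (hp : Relation.ReflTransGen (TauF M) v v')
    (hu : ¬ M.F u) (h' : ¬ M.F (op u v')) : EpsF M (op u v) (op u v') := by
  induction hp using Relation.ReflTransGen.head_induction_on with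
  | refl => exact ⟨h', .refl⟩
  | head hstep _ ih =>
      have hstep' := hop.tr_tau_right hM (t1 := u) hstep.1
      have hF := hop.not_F_of_tr_tau hM hu hstep.2.1 hstep' ih.1
      exact ⟨hF, ih.2.head ⟨hstep', hF, ih.1⟩⟩

theorem epsFS_compose (hop : IsStaticOp Act op) (hM : IsStable M)
    {t1 t1' t2 t2' : Tm Act} (h1 : EpsFS M t1 t1') (h2 : EpsFS M t2 t2')
    (h' : ¬ M.F (op t1' t2')) : EpsFS M (op t1 t2) (op t1' t2') := by
  obtain ⟨⟨hF1, hp1⟩, hs1⟩ := h1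
  obtain ⟨⟨hF2, hp2⟩, hs2⟩ := h2
  have hmid := hop.epsF_right hM hp2 (mt (hop.F_left hM) h') h'
  have hstart := hop.epsF_left hM hp1 hF2 hmid.1
  exact ⟨⟨hstart.1, hstart.2.trans hmid.2⟩, (hop.stable_iff hM).2 ⟨hs1, hs2⟩⟩

theorem reflTransGen_decompose (hop : IsStaticOp Act op) (hM : IsStable M)
    {s t3 : Tm Act} (hp : Relation.ReflTransGen (TauF M) s t3)
    {t1 t2 : Tm Act} (hs : s = op t1 t2) :
    ∃ t1' t2', t3 = op t1' t2' ∧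
      Relation.ReflTransGen (TauF M) t1 t1' ∧ Relation.ReflTransGen (TauF M) t2 t2' := by
  induction hp using Relation.ReflTransGen.head_induction_on generalizing t1 t2 with
  | refl => exact ⟨t1, t2, hs, .refl, .refl⟩
  | head hstep _ ih =>
      subst hs
      obtain ⟨htr, hF, hzF⟩ := hstep
      rcases hop.tr_tau_cases hM htr with ⟨u, rfl, hu⟩ | ⟨v, rfl, hv⟩
      · obtain ⟨t1', t2', rfl, p1, p2⟩ := ih rfl
        exact ⟨t1', t2', rfl,
          p1.head ⟨hu, mt (hop.F_left hM) hF, mt (hop.F_left hM) hzF⟩, p2⟩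
      · obtain ⟨t1', t2', rfl, p1, p2⟩ := ih rfl
        exact ⟨t1', t2', rfl, p1,
          p2.head ⟨hv, mt (hop.F_right hM) hF, mt (hop.F_right hM) hzF⟩⟩

theorem epsFS_decompose (hop : IsStaticOp Act op) (hM : IsStable M)
    {t1 t2 t3 : Tm Act} (h : EpsFS M (op t1 t2) t3) :
    ∃ t1' t2', EpsFS M t1 t1' ∧ EpsFS M t2 t2' ∧ t3 = op t1' t2' := by
  obtain ⟨⟨hF, hp⟩, hs⟩ := h
  obtain ⟨t1', t2', rfl, p1, p2⟩ := hop.reflTransGen_decompose hM hp rfl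
  obtain ⟨hs1, hs2⟩ := (hop.stable_iff hM).1 hs
  exact ⟨t1', t2', ⟨⟨mt (hop.F_left hM) hF, p1⟩, hs1⟩,
    ⟨⟨mt (hop.F_right hM) hF, p2⟩, hs2⟩, rfl⟩

end IsStaticOp

end CLL

/-- composition and decomposition of `⇒ε_F|` w.r.t. `□`, `∥_A`
and `∧`. -/
theorem stmt7 (Act : Type) (M : CLL.Model Act) (hM : CLL.IsStable M) :
    (∀ op : CLL.Tm Act → CLL.Tm Act → CLL.Tm Act,
      (op = CLL.Tm.ec ∨ ∃ A : Set Act, op = CLL.Tm.par A) →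
      ∀ t1 t1' t2 t2' : CLL.Tm Act, CLL.EpsFS M t1 t1' → CLL.EpsFS M t2 t2' →
        CLL.EpsFS M (op t1 t2) (op t1' t2')) ∧
    (∀ t1 t1' t2 t2' : CLL.Tm Act, CLL.EpsFS M t1 t1' → CLL.EpsFS M t2 t2' →
      ¬ M.F (CLL.Tm.conj t1' t2') →
      CLL.EpsFS M (CLL.Tm.conj t1 t2) (CLL.Tm.conj t1' t2')) ∧
    (∀ op : CLL.Tm Act → CLL.Tm Act → CLL.Tm Act, CLL.IsStaticOp Act op →
      ∀ t1 t2 t3 : CLL.Tm Act, CLL.EpsFS M (op t1 t2) t3 →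
        ∃ t1' t2', CLL.EpsFS M t1 t1' ∧ CLL.EpsFS M t2 t2' ∧ t3 = op t1' t2') := by
  refine ⟨fun op hop _ _ _ _ h1 h2 => ?_,
    fun _ _ _ _ h1 h2 h' => CLL.IsStaticOp.epsFS_compose (Or.inr (Or.inl rfl)) hM h1 h2 h',
    fun op hop _ _ _ h => hop.epsFS_decompose hM h⟩
  have hstatic : CLL.IsStaticOp Act op := by
    rcases hop with rfl | ⟨A, rfl⟩
    exacts [Or.inl rfl, Or.inr (Or.inr ⟨A, rfl⟩)]
  refine hstatic.epsFS_compose hM h1 h2 fun hF => ?_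
  rcases hM.F_of_ec_or_par hop hF with h | h
  exacts [h1.1.not_F_right h, h2.1.not_F_right h]
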